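/- For α ∈ Q, the component identity T^α_{m}(α) + m X_m(α) = 0 holds for all m ∈ ℤ, where T^h(α,z) = h⁻(z)X(α,z) + X(α,z)h⁺(z) = Σ_k T^h_k(α) z^{−k−1}. -/

import Mathlib

/-! On `e^γ ⊗ u` the vertex operator gives `e^{γ+α} ⊗ z^{(γ,α)} S(z) σ_z(u)`, where
`S(z) = exp T₋(α,z) = Σ_p S_p z^p` and `σ_z = exp T₊(α,z)` is the algebra map shifting `d_i(-k)`
by `-α_i z^{-k}`. Apply the Euler operator `θ = z d/dz` to `S(z) σ_z(u)` and compare coefficients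
of `z^c`, `c = -m - (γ,α)`. Newton's recursion `p S_p = Σ_k α(-k) S_{p-k}` gives
`θS = (Σ_{k ≥ 1} α(-k) z^k) S`, and the chain rule gives `θ σ_z(u) = Σ_{k ≥ 1} σ_z(α(k) u) z^{-k}`.
Hence the modes `j ≠ 0` of `T^α_m(α)` add up to `c X_m(α)`, the zero mode contributes
`(γ,α) X_m(α)`, and `c + (γ,α) + m = 0`. Everything is additive in the vector, and the truncated
sums are exact once `C` exceeds both `c` plus the `z`-degree of `σ_z(u)` and the levels of the
variables of `u`. -/

open MvPolynomial

noncomputable section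

/-- Index of a basis of `𝔭 = ℂ ⊗ Γ`: `Sum.inl i ↔ δᵢ`, `Sum.inr i ↔ dᵢ`. -/
abbrev TIdx (N : ℕ) := Fin N ⊕ Fin N

/-- Variables of the symmetric algebra `S(𝔟₋)`: the variable `(x, k)` represents
`x(−k)` (the level-0 variables are inert dummies). -/
abbrev TVar (N : ℕ) := TIdx N × ℕ

/-- The symmetric algebra `S(𝔟₋)` (containing `S(𝔞₋)` as the subalgebra generated by
the `δ`-variables). -/
abbrev PolyB (N : ℕ) := MvPolynomial (TVar N) ℂ

/-- The lattice `Γ`, an element being recorded by its `δ`-coordinates and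
`d`-coordinates. -/
abbrev Gam (N : ℕ) := (Fin N → ℤ) × (Fin N → ℤ)

/-- The Fock space `V(Γ) = ℂ[Γ] ⊗ S(𝔟₋)`: a formal (finitely supported) sum
`Σ_γ e^γ ⊗ u_γ`. -/
abbrev VGam (N : ℕ) := Gam N →₀ PolyB N

variable {N : ℕ}

/-- The pairing `(γ, α)` for `γ ∈ Γ` and `α ∈ Q` (given by its `δ`-coordinates);
only the `d`-coordinates of `γ` pair non-trivially with `Q`. -/
def pairQ (γ : Gam N) (α : Fin N → ℤ) : ℤ := ∑ i, γ.2 i * α i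

/-- The inclusion `Q → Γ`. -/
def incQ (α : Fin N → ℤ) : Gam N := (α, 0)

/-- The pairing on `Γ`. -/
def pairG (γ γ' : Gam N) : ℤ := ∑ i, (γ.1 i * γ'.2 i + γ.2 i * γ'.1 i)

/-- The creation element `α(−j) ∈ S(𝔞₋)` for `α ∈ Q`, as a polynomial. -/
def Pa (α : Fin N → ℤ) (j : ℕ) : PolyB N := ∑ i, (α i : ℂ) • X (Sum.inl i, j)

/-- The Schur-like coefficients of the creation exponential:
`exp T₋(α,z) = Σ_{p≥0} SpB α p · z^p`, characterized by `S₀ = 1` and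
`p·S_p = Σ_{j=1}^p α(−j)·S_{p−j}` (from differentiating the exponential). -/
def SpB (α : Fin N → ℤ) : ℕ → PolyB N
  | 0 => 1
  | p + 1 =>
      ((p : ℂ) + 1)⁻¹ • ∑ j ∈ Finset.range (p + 1), Pa α (j + 1) * SpB α (p - j)
  decreasing_by omega

/-- The annihilation exponential `exp T₊(α,z)` for `α ∈ Q`: since `T₊(α,z)` is a sum of
derivations sending each variable to a constant, its exponential is the `ℂ`-algebra
endomorphism determined by `δᵢ(−j) ↦ δᵢ(−j)` and `dᵢ(−j) ↦ dᵢ(−j) − αᵢ z^{−j}`,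
with values in Laurent polynomials in `z` over `S(𝔟₋)`. -/
def sigmaA (α : Fin N → ℤ) : PolyB N →ₐ[ℂ] AddMonoidAlgebra (PolyB N) ℤ :=
  aeval fun v =>
    AddMonoidAlgebra.single 0 (X v) -
      (match v with
        | (Sum.inl _, _) => 0
        | (Sum.inr i, k) =>
            if k = 0 then 0
            else AddMonoidAlgebra.single (-(k : ℤ)) (C (α i : ℂ)))

/-- Extraction of the coefficient of `z^c` from `(exp T₋(α,z)) · ℓ`, for a Laurent
polynomial `ℓ` over `S(𝔟₋)` (with the convention `S_p(α) = 0` for `p < 0`). -/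
def coefF (α : Fin N → ℤ) (c : ℤ) (ℓ : AddMonoidAlgebra (PolyB N) ℤ) : PolyB N :=
  Finsupp.sum (show ℤ →₀ PolyB N from ℓ.coeff) fun e p =>
    (if 0 ≤ c - e then SpB α ((c - e).toNat) else 0) * p

/-- The component `X_m(α)` of the vertex operator
`X(α,z) = exp T₋(α,z) · e^α · z^{α(0)} · exp T₊(α,z) = Σ_m X_m(α) z^{−m}` acting on
`V(Γ)`: on `e^γ ⊗ u` it produces `e^{γ+α}` tensored with the `z^{−m−(γ,α)}`-coefficient
of `exp T₋(α,z) · (exp T₊(α,z) u)`. -/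
def XopF (α : Fin N → ℤ) (m : ℤ) (v : VGam N) : VGam N :=
  Finsupp.sum v fun γ u =>
    Finsupp.single (γ + incQ α) (coefF α (-m - pairQ γ α) (sigmaA α u))

/-- The action of `b(k)` on `V(Γ)` for `b ∈ 𝔭` (given by its `δ`- and `d`-coordinates):
for `k < 0` multiplication by the creation element `b(k)`, for `k = 0` the scalar
`(γ, b)`, and for `k > 0` the derivation sending `x(−k) ↦ k⟨b,x⟩`. -/
def popF (b : (Fin N → ℂ) × (Fin N → ℂ)) (k : ℤ) (v : VGam N) : VGam N :=
  Finsupp.sum v fun γ u =>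
    Finsupp.single γ
      (if k < 0 then
        (∑ i, (b.1 i • X (Sum.inl i, (-k).toNat)
               + b.2 i • X (Sum.inr i, (-k).toNat))) * u
      else if k = 0 then
        (∑ i, ((γ.1 i : ℂ) * b.2 i + (γ.2 i : ℂ) * b.1 i)) • u
      else
        ∑ i, (((k : ℂ) * b.2 i) • pderiv (Sum.inl i, k.toNat) u
              + ((k : ℂ) * b.1 i) • pderiv (Sum.inr i, k.toNat) u))

/-- An element `α ∈ Q` viewed as an element of `𝔭`. -/
def toP (α : Fin N → ℤ) : (Fin N → ℂ) × (Fin N → ℂ) := (fun i => (α i : ℂ), 0)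

namespace AddMonoidAlgebra

variable (k : Type*) {R : Type*} [CommSemiring k] [CommRing R] [Algebra k R]

def eulerLinear : R[ℤ] →ₗ[k] R[ℤ] :=
  Finsupp.lsum k (fun e => e • lsingle e) ∘ₗ (coeffLinearEquiv k).toLinearMap

lemma eulerLinear_single (e : ℤ) (p : R) : eulerLinear k (single e p) = single e (e • p) := by
  rw [eulerLinear, LinearMap.comp_apply, LinearEquiv.coe_coe, coeffLinearEquiv_apply,
    coeff_single, Finsupp.lsum_single, LinearMap.smul_apply, lsingle_apply, smul_single]

lemma eulerLinear_mul (a b : R[ℤ]) :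
    eulerLinear k (a * b) = a * eulerLinear k b + b * eulerLinear k a := by
  induction a using induction_linear with
  | zero => rw [zero_mul, map_zero, zero_mul, mul_zero, add_zero]
  | add a a' ha ha' => simp only [add_mul, map_add, ha, ha']; ring
  | single e p =>
    induction b using induction_linear with
    | zero => rw [mul_zero, map_zero, zero_mul, mul_zero, add_zero]
    | add b b' hb hb' => simp only [mul_add, map_add, hb, hb']; ring
    | single f q =>
      simp only [single_mul_single, eulerLinear_single, add_smul, single_add, mul_smul_comm,
        add_comm f e, mul_comm q p]
      abel

/-- The Euler operator `z d/dz` on Laurent polynomials. -/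
def eulerDeriv : Derivation k R[ℤ] R[ℤ] := Derivation.mk' (eulerLinear k) (eulerLinear_mul k)

lemma eulerDeriv_single (e : ℤ) (p : R) : eulerDeriv k (single e p) = single e (e • p) :=
  eulerLinear_single k e p

end AddMonoidAlgebra

theorem Derivation.map_algHom_eq_sum_pderiv {R A σ : Type*} [CommSemiring R] [CommSemiring A]
    [Algebra R A] (D : Derivation R A A) (φ : MvPolynomial σ R →ₐ[R] A) {s : Finset σ}
    {u : MvPolynomial σ R} (hu : u ∈ supported R (s : Set σ)) :
    D (φ u) = ∑ v ∈ s, φ (pderiv v u) * D (φ (X v)) := by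
  classical
  induction hu using Algebra.adjoin_induction with
  | mem x hx =>
    obtain ⟨w, hw, rfl⟩ := hx
    simp [pderiv_X, Pi.single_apply, Finset.mem_coe.mp hw]
  | algebraMap r => simp
  | add x y _ _ hx hy => simp only [map_add, hx, hy, add_mul, Finset.sum_add_distrib]
  | mul x y _ _ hx hy =>
    simp only [map_mul, Derivation.leibniz, hx, hy, smul_eq_mul, Finset.mul_sum,
      ← Finset.sum_add_distrib, map_add, add_mul, mul_assoc]

lemma sum_Icc_neg_eq_sum_range {M : Type*} [AddCommMonoid M] (C : ℕ) (f : ℤ → M) :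
    ∑ j ∈ Finset.Icc (-(C : ℤ)) (-1), f j = ∑ k ∈ Finset.range C, f (-(k + 1 : ℕ)) := by
  rw [Int.Icc_eq_finset_map, Finset.sum_map, show (-1 + 1 - -(C : ℤ)).toNat = C by omega,
    ← Finset.sum_range_reflect]
  refine Finset.sum_congr rfl fun k hk => ?_
  simp only [Finset.mem_range] at hk
  simp only [Function.Embedding.trans_apply, Nat.castEmbedding_apply, addLeftEmbedding_apply]
  congr 1
  omega

lemma sum_Icc_zero_eq_sum_range_add {M : Type*} [AddCommMonoid M] (C : ℕ) (f : ℤ → M) :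
    ∑ j ∈ Finset.Icc (0 : ℤ) C, f j = ∑ k ∈ Finset.range C, f (k + 1 : ℕ) + f 0 := by
  rw [Int.Icc_eq_finset_map, Finset.sum_map, show ((C : ℤ) + 1 - 0).toNat = C + 1 by omega,
    Finset.sum_range_succ']
  simp only [Function.Embedding.trans_apply, Nat.castEmbedding_apply, addLeftEmbedding_apply,
    zero_add, Nat.cast_zero]

open AddMonoidAlgebra (single single_zero single_neg single_mul_single eulerDeriv eulerDeriv_single
  induction_linear sum_coeff_single coeffLinearEquiv)
open scoped AddMonoidAlgebra
open Filter

/-- `S_d(α)`, extended by `0` to negative `d`. -/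
def SpBZ (α : Fin N → ℤ) (d : ℤ) : PolyB N := if 0 ≤ d then SpB α d.toNat else 0

lemma SpBZ_natCast (α : Fin N → ℤ) (p : ℕ) : SpBZ α p = SpB α p := by
  rw [SpBZ, if_pos (Int.natCast_nonneg p), Int.toNat_natCast]

lemma SpBZ_of_neg (α : Fin N → ℤ) {d : ℤ} (hd : d < 0) : SpBZ α d = 0 := if_neg hd.not_ge

lemma smul_SpBZ_eq_sum (α : Fin N → ℤ) {d : ℤ} {K : ℕ} (hd : d ≤ K) :
    (d : ℂ) • SpBZ α d = ∑ k ∈ Finset.range K, Pa α (k + 1) * SpBZ α (d - (k + 1 : ℕ)) := by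
  rcases lt_or_ge d 1 with hd1 | hd1
  · rw [Finset.sum_eq_zero fun k _ => by rw [SpBZ_of_neg α (by omega), mul_zero]]
    rcases eq_or_ne d 0 with rfl | hd0
    · rw [Int.cast_zero, zero_smul]
    · rw [SpBZ_of_neg α (by omega), smul_zero]
  obtain ⟨p, rfl⟩ : ∃ p : ℕ, d = (p + 1 : ℕ) := ⟨(d - 1).toNat, by omega⟩
  have hterm : ∀ k ∈ Finset.range K, Pa α (k + 1) * SpBZ α ((p + 1 : ℕ) - (k + 1 : ℕ)) =
      if k < p + 1 then Pa α (k + 1) * SpB α (p - k) else 0 := by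
    intro k _
    split_ifs with hk
    · rw [show ((p + 1 : ℕ) : ℤ) - (k + 1 : ℕ) = (p - k : ℕ) by omega, SpBZ_natCast]
    · rw [SpBZ_of_neg α (by omega), mul_zero]
  rw [Finset.sum_congr rfl hterm, ← Finset.sum_filter, Int.cast_natCast, SpBZ_natCast, SpB,
    smul_smul, Nat.cast_add_one, mul_inv_cancel₀ (Nat.cast_add_one_ne_zero p), one_smul]
  congr 1
  ext k
  simp only [Finset.mem_range, Finset.mem_filter]
  omega

def coefFLinear (α : Fin N → ℤ) (c : ℤ) : (PolyB N)[ℤ] →ₗ[ℂ] PolyB N :=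
  Finsupp.lsum ℂ (fun e => LinearMap.mulLeft ℂ (SpBZ α (c - e))) ∘ₗ
    (coeffLinearEquiv ℂ).toLinearMap

lemma coefF_zero (α : Fin N → ℤ) (c : ℤ) : coefF α c 0 = 0 :=
  (coefFLinear α c).map_zero

lemma coefF_add (α : Fin N → ℤ) (c : ℤ) (ℓ ℓ' : (PolyB N)[ℤ]) :
    coefF α c (ℓ + ℓ') = coefF α c ℓ + coefF α c ℓ' :=
  (coefFLinear α c).map_add ℓ ℓ'

lemma coefF_smul (α : Fin N → ℤ) (c : ℤ) (r : ℂ) (ℓ : (PolyB N)[ℤ]) :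
    coefF α c (r • ℓ) = r • coefF α c ℓ :=
  (coefFLinear α c).map_smul r ℓ

lemma coefF_sum {ι : Type*} (α : Fin N → ℤ) (c : ℤ) (s : Finset ι) (f : ι → (PolyB N)[ℤ]) :
    coefF α c (∑ i ∈ s, f i) = ∑ i ∈ s, coefF α c (f i) :=
  map_sum (coefFLinear α c) f s

lemma coefF_single (α : Fin N → ℤ) (c e : ℤ) (p : PolyB N) :
    coefF α c (single e p) = SpBZ α (c - e) * p :=
  Finsupp.lsum_single ℂ (fun e => LinearMap.mulLeft ℂ (SpBZ α (c - e))) e p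

lemma coefF_mul_single (α : Fin N → ℤ) (c d : ℤ) (ℓ : (PolyB N)[ℤ]) (p : PolyB N) :
    coefF α c (ℓ * single d p) = coefF α (c - d) ℓ * p := by
  induction ℓ using induction_linear with
  | zero => rw [zero_mul, coefF_zero, coefF_zero, zero_mul]
  | add f g hf hg => rw [add_mul, coefF_add, hf, hg, coefF_add, add_mul]
  | single e q =>
    rw [single_mul_single, coefF_single, coefF_single, mul_assoc, sub_sub, add_comm d]

/-- The coefficient of `z^c` in `θ(S(z) ℓ) = (θS) ℓ + S (θℓ)`, where `θ = z d/dz`,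
`S(z) = exp T₋(α,z)` and `θS = (Σ_{k ≥ 1} α(-k) z^k) S` by Newton's recursion. -/
lemma smul_coefF_eq_add_coefF_eulerDeriv (α : Fin N → ℤ) {c : ℤ} {K : ℕ} (ℓ : (PolyB N)[ℤ])
    (hK : ∀ e ∈ ℓ.coeff.support, c - e ≤ K) :
    (c : ℂ) • coefF α c ℓ =
      ∑ k ∈ Finset.range K, Pa α (k + 1) * coefF α (c - (k + 1 : ℕ)) ℓ
        + coefF α c (eulerDeriv ℂ ℓ) := by
  conv_lhs => rw [← sum_coeff_single ℓ]
  conv_rhs => rw [← sum_coeff_single ℓ]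
  simp only [Finsupp.sum, coefF_sum, map_sum, eulerDeriv_single, coefF_single, Finset.smul_sum,
    Finset.mul_sum]
  rw [Finset.sum_comm, ← Finset.sum_add_distrib]
  refine Finset.sum_congr rfl fun e he => ?_
  rw [← Int.cast_smul_eq_zsmul ℂ, mul_smul_comm, ← smul_mul_assoc, ← smul_mul_assoc,
    show (c : ℂ) = ((c - e : ℤ) : ℂ) + e by push_cast; ring, add_smul, add_mul,
    smul_SpBZ_eq_sum α (hK e he), Finset.sum_mul]
  congr 1
  refine Finset.sum_congr rfl fun k _ => ?_
  rw [mul_assoc, sub_right_comm]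

lemma eulerDeriv_sigmaA_X_inl (α : Fin N → ℤ) (i : Fin N) (k : ℕ) :
    eulerDeriv ℂ (sigmaA α (X (Sum.inl i, k))) = 0 := by
  rw [sigmaA, aeval_X, sub_zero, eulerDeriv_single, zero_smul, single_zero]

lemma eulerDeriv_sigmaA_X_inr (α : Fin N → ℤ) (i : Fin N) (k : ℕ) :
    eulerDeriv ℂ (sigmaA α (X (Sum.inr i, k))) = single (-(k : ℤ)) ((k : ℤ) • C (α i : ℂ)) := by
  rw [sigmaA, aeval_X]
  rcases k with _ | k
  · simp only [if_pos, sub_zero, eulerDeriv_single, zero_smul, single_zero, Nat.cast_zero]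
  · simp only [Nat.succ_ne_zero, if_false, map_sub, eulerDeriv_single, zero_smul, single_zero,
      zero_sub, ← single_neg, neg_smul, neg_neg]

/-- The action of `α(n)`, `n > 0`, on `S(𝔟₋)`. -/
def posMode (α : Fin N → ℤ) (n : ℕ) (u : PolyB N) : PolyB N :=
  ∑ i, ((n : ℂ) * (α i : ℂ)) • pderiv (Sum.inr i, n) u

lemma coefF_eulerDeriv_sigmaA (α : Fin N → ℤ) (c : ℤ) {K : ℕ} {u : PolyB N}
    (hu : u ∈ supported ℂ {v : TVar N | v.2 ≤ K}) :
    coefF α c (eulerDeriv ℂ (sigmaA α u)) =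
      ∑ k ∈ Finset.range K, coefF α (c + (k + 1 : ℕ)) (sigmaA α (posMode α (k + 1) u)) := by
  have hs : u ∈ supported ℂ
      ((Finset.univ ×ˢ Finset.range (K + 1) : Finset (TVar N)) : Set (TVar N)) := by
    refine supported_mono (fun v hv => ?_) hu
    simp only [Set.mem_ofPred_eq] at hv
    simp only [Finset.coe_product, Finset.coe_univ, Finset.coe_range, Set.mem_prod, Set.mem_univ,
      Set.mem_Iio, true_and]
    omega
  rw [(eulerDeriv ℂ).map_algHom_eq_sum_pderiv _ hs, Finset.sum_product, Fintype.sum_sum_type]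
  simp only [eulerDeriv_sigmaA_X_inl, mul_zero, Finset.sum_const_zero, zero_add,
    eulerDeriv_sigmaA_X_inr, coefF_sum, coefF_mul_single, posMode, map_sum, map_smul, coefF_smul]
  rw [Finset.sum_comm, Finset.sum_range_succ', Nat.cast_zero]
  simp only [zero_zsmul, mul_zero, Finset.sum_const_zero, add_zero, sub_neg_eq_add]
  refine Finset.sum_congr rfl fun k _ => Finset.sum_congr rfl fun i _ => ?_
  rw [← Int.cast_smul_eq_zsmul ℂ, mul_smul_comm, mul_comm _ (C _), ← smul_eq_C_mul, smul_smul,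
    Int.cast_natCast]

lemma XopF_single (α : Fin N → ℤ) (m : ℤ) (γ : Gam N) (u : PolyB N) :
    XopF α m (Finsupp.single γ u) =
      Finsupp.single (γ + incQ α) (coefF α (-m - pairQ γ α) (sigmaA α u)) :=
  Finsupp.sum_single_index (by rw [map_zero, coefF_zero, Finsupp.single_zero])

lemma XopF_add (α : Fin N → ℤ) (m : ℤ) (v w : VGam N) :
    XopF α m (v + w) = XopF α m v + XopF α m w :=
  Finsupp.sum_add_index' (fun _ => by rw [map_zero, coefF_zero, Finsupp.single_zero])
    fun _ _ _ => by rw [map_add, coefF_add, Finsupp.single_add]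

lemma popF_add (b : (Fin N → ℂ) × (Fin N → ℂ)) (k : ℤ) (v w : VGam N) :
    popF b k (v + w) = popF b k v + popF b k w := by
  refine Finsupp.sum_add_index' (fun _ => ?_) (fun _ _ _ => ?_)
  · split_ifs <;> simp
  · split_ifs <;> simp [mul_add, smul_add, Finsupp.single_add, Finset.sum_add_distrib]; abel

lemma popF_toP_neg_single (α : Fin N → ℤ) (n : ℕ) (γ : Gam N) (u : PolyB N) :
    popF (toP α) (-(n + 1 : ℕ)) (Finsupp.single γ u) = Finsupp.single γ (Pa α (n + 1) * u) := by
  have hn : -((n + 1 : ℕ) : ℤ) < 0 := by omega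
  rw [popF, Finsupp.sum_single_index (by rw [if_pos hn, mul_zero, Finsupp.single_zero]),
    if_pos hn, neg_neg, Int.toNat_natCast]
  simp [Pa, toP]

lemma popF_toP_zero_single (α : Fin N → ℤ) (γ : Gam N) (u : PolyB N) :
    popF (toP α) 0 (Finsupp.single γ u) = Finsupp.single γ ((pairQ γ α : ℂ) • u) := by
  rw [popF, Finsupp.sum_single_index (by simp), if_neg (lt_irrefl 0), if_pos rfl]
  simp [pairQ, toP]

lemma popF_toP_pos_single (α : Fin N → ℤ) (n : ℕ) (γ : Gam N) (u : PolyB N) :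
    popF (toP α) (n + 1 : ℕ) (Finsupp.single γ u) =
      Finsupp.single γ (posMode α (n + 1) u) := by
  have hn : ¬ ((n + 1 : ℕ) : ℤ) < 0 := by omega
  have hn' : ((n + 1 : ℕ) : ℤ) ≠ 0 := by omega
  rw [popF, Finsupp.sum_single_index (by simp), if_neg hn, if_neg hn', Int.toNat_natCast]
  simp [posMode, toP]

/-- `T^α_m(α) v + m X_m(α) v` with the sums over the modes `α(j)` truncated to `|j| ≤ C`. -/
def truncT (α : Fin N → ℤ) (m : ℤ) (C : ℕ) (v : VGam N) : VGam N :=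
  (∑ j ∈ Finset.Icc (-(C : ℤ)) (-1 : ℤ), popF (toP α) j (XopF α (m - j) v))
    + (∑ j ∈ Finset.Icc (0 : ℤ) (C : ℤ), XopF α (m - j) (popF (toP α) j v))
    + (m : ℂ) • XopF α m v

lemma truncT_zero (α : Fin N → ℤ) (m : ℤ) (C : ℕ) : truncT α m C 0 = 0 := by
  simp [truncT, XopF, popF]

lemma truncT_add (α : Fin N → ℤ) (m : ℤ) (C : ℕ) (v w : VGam N) :
    truncT α m C (v + w) = truncT α m C v + truncT α m C w := by
  simp only [truncT, XopF_add, popF_add, Finset.sum_add_distrib, smul_add]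
  abel

lemma truncT_single (α : Fin N → ℤ) (m : ℤ) (C : ℕ) (γ : Gam N) (u : PolyB N) :
    truncT α m C (Finsupp.single γ u) = Finsupp.single (γ + incQ α)
      (∑ k ∈ Finset.range C, Pa α (k + 1) * coefF α (-m - pairQ γ α - (k + 1 : ℕ)) (sigmaA α u)
        + ∑ k ∈ Finset.range C,
            coefF α (-m - pairQ γ α + (k + 1 : ℕ)) (sigmaA α (posMode α (k + 1) u))
        + ((pairQ γ α : ℂ) + m) • coefF α (-m - pairQ γ α) (sigmaA α u)) := by
  simp only [truncT, sum_Icc_neg_eq_sum_range, sum_Icc_zero_eq_sum_range_add, XopF_single,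
    popF_toP_neg_single, popF_toP_zero_single, popF_toP_pos_single, map_smul, coefF_smul,
    Finsupp.smul_single, ← Finsupp.single_finsetSum, ← Finsupp.single_add, add_smul]
  refine congrArg (Finsupp.single _) ?_
  simp only [add_assoc, sub_zero]
  refine congrArg₂ (· + ·) (Finset.sum_congr rfl fun k _ => ?_)
    (congrArg₂ (· + ·) (Finset.sum_congr rfl fun k _ => ?_) rfl)
  · congr 2; ring
  · congr 2; ring

lemma eventually_truncT_single_eq_zero (α : Fin N → ℤ) (m : ℤ) (γ : Gam N) (u : PolyB N) :
    ∀ᶠ C in atTop, truncT α m C (Finsupp.single γ u) = 0 := by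
  set c := -m - pairQ γ α with hc
  have hK : ∀ᶠ C : ℕ in atTop, ∀ e ∈ (sigmaA α u).coeff.support, c - e ≤ C :=
    (eventually_all_finset _).2 fun e _ => tendsto_natCast_atTop_atTop.eventually_ge_atTop (c - e)
  have hu : ∀ᶠ C : ℕ in atTop, u ∈ supported ℂ {v : TVar N | v.2 ≤ C} :=
    ((eventually_all_finset u.vars).2 fun v _ => eventually_ge_atTop v.2).mono
      fun C hC => supported_mono hC (mem_supported_vars u)
  filter_upwards [hK, hu] with C hK hu
  rw [truncT_single, ← coefF_eulerDeriv_sigmaA α c hu,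
    ← smul_coefF_eq_add_coefF_eulerDeriv α _ hK, ← add_smul,
    show (c : ℂ) + ((pairQ γ α : ℂ) + m) = 0 by rw [hc]; push_cast; ring,
    zero_smul, Finsupp.single_zero]

lemma eventually_truncT_eq_zero (α : Fin N → ℤ) (m : ℤ) (v : VGam N) :
    ∀ᶠ C in atTop, truncT α m C v = 0 := by
  induction v using Finsupp.induction_linear with
  | zero => exact .of_forall fun C => truncT_zero α m C
  | add v w hv hw =>
    filter_upwards [hv, hw] with C hv hw
    rw [truncT_add, hv, hw, add_zero]
  | single γ u => exact eventually_truncT_single_eq_zero α m γ u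

/-- For `α ∈ Q`, the component identity `T^α_m(α) + m·X_m(α) = 0` holds
for all `m ∈ ℤ`, where `T^h(α,z) = h⁻(z)X(α,z) + X(α,z)h⁺(z) = Σ_k T^h_k(α) z^{−k−1}`
with `h⁺(z) = Σ_{j≥0} h(j)z^{−j−1}`, `h⁻(z) = Σ_{j<0} h(j)z^{−j−1}`.  In components
(the sums being locally finite): for every `m` and every vector `v`,
`Σ_{j<0} α(j)X_{m−j}(α)v + Σ_{j≥0} X_{m−j}(α)(α(j)v) + m·X_m(α)v = 0`. -/
theorem T_component_identity {N : ℕ} (α : Fin N → ℤ) (m : ℤ) (v : VGam N) :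
    ∃ B0 : ℕ, ∀ C : ℕ, B0 ≤ C →
      (∑ j ∈ Finset.Icc (-(C : ℤ)) (-1 : ℤ), popF (toP α) j (XopF α (m - j) v))
        + (∑ j ∈ Finset.Icc (0 : ℤ) (C : ℤ), XopF α (m - j) (popF (toP α) j v))
        + (m : ℂ) • XopF α m v = 0 :=
  eventually_atTop.mp (eventually_truncT_eq_zero α m v)

end
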